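/- arXiv:1804.10037 — 6 statements merged into one kernel-verified Lean document; each statement's English description precedes it below -/
import Mathlib

section
/- There exist real numbers da_act, da_hyp, dt_act, dt_hyp, dq_act, dq_hyp, dw_act, dw_hyp, Da, St, Dw, Sw satisfying: Dw < 0, Sw > 0, Da = 1, St = 1, dq_act = Dw*dw_act + Da*da_act, dq_act = Sw*dw_act + St*dt_act, dq_hyp = Dw*dw_hyp + Da*da_hyp, dq_hyp = Sw*dw_hyp + St*dt_hyp, dt_act = dt_hyp, da_hyp = 0, dq_hyp < (1/2)*dq_act, (1/2)*dq_act < 0, and yet dw_act ≤ 0. -/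
theorem krugman_counterexample :
    ∃ da_act da_hyp dt_act dt_hyp dq_act dq_hyp dw_act dw_hyp Da St Dw Sw : ℝ,
      Dw < 0 ∧ Sw > 0 ∧ Da = 1 ∧ St = 1 ∧
      dq_act = Dw * dw_act + Da * da_act ∧
      dq_act = Sw * dw_act + St * dt_act ∧
      dq_hyp = Dw * dw_hyp + Da * da_hyp ∧
      dq_hyp = Sw * dw_hyp + St * dt_hyp ∧
      dt_act = dt_hyp ∧ da_hyp = 0 ∧
      dq_hyp < (1/2) * dq_act ∧ (1/2) * dq_act < 0 ∧
      dw_act ≤ 0 := by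
  exact ⟨-2, 0, -2, -2, -2, -4/3, 0, 2/3, 1, 1, -2, 1, by norm_num⟩
end

section
/- For all real numbers da_act, da_hyp, dt_act, dt_hyp, dq_act, dq_hyp, dw_act, dw_hyp, Dw, Sw with Dw < 0, Sw > 0, Sw ≥ -Dw, dq_act = Dw*dw_act + da_act, dq_act = Sw*dw_act + dt_act, dq_hyp = Dw*dw_hyp, dq_hyp = Sw*dw_hyp + dt_act, dq_hyp < (1/2)*dq_act, and (1/2)*dq_act < 0, it follows that dw_act > 0. -/
theorem krugman_strengthened
    (da_act da_hyp dt_act dt_hyp dq_act dq_hyp dw_act dw_hyp Dw Sw : ℝ)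
    (h1 : Dw < 0) (h2 : Sw > 0) (h3 : Sw ≥ -Dw)
    (h4 : dq_act = Dw * dw_act + da_act)
    (h5 : dq_act = Sw * dw_act + dt_act)
    (h6 : dq_hyp = Dw * dw_hyp)
    (h7 : dq_hyp = Sw * dw_hyp + dt_act)
    (h8 : dq_hyp < (1/2) * dq_act) (h9 : (1/2) * dq_act < 0) :
    dw_act > 0 := by nlinarith [mul_pos h2 (neg_pos.mpr h1), sq_nonneg dw_hyp, mul_self_nonneg (dw_act*Sw)]
end

section
/- There is no tuple of real numbers (a,b,c,Fx,Fy,Fz,Fxx,Fxy,Fxz,Fyy,Fyz,Fzz) (written v1,...,v12 in the order a=v1, b=v2, c=v3, Fx=v4, Fxx=v5, Fy=v6, Fxy=v7, Fyy=v8, Fz=v9, Fxz=v10, Fyz=v11, Fzz=v12) satisfying all of: v1*v10 + v2*v7 + v3*v5 = 0; v1*v11 + v2*v8 + v3*v7 = 0; v1*v12 + v10*v3 + v11*v2 = 0; v1 > 0; v2 > 0; v3 > 0; v4 > 0; v6 > 0; v9 > 0; 2*v11*v6*v9 > v12*v6^2 + v8*v9^2; 2*v10*v6*(v11*v4 + v7*v9)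 + v9*(2*v11*v4*v7 - 2*v11*v5*v6 + v5*v8*v9) + v12*(v4^2*v8 - 2*v4*v6*v7 + v5*v6^2) > v10^2*v6^2 + 2*v10*v4*v8*v9 + v11^2*v4^2 + v7^2*v9^2; and v12 > 0. -/
set_option maxHeartbeats 1000000


theorem production_clause_one_unsat :
    ¬ ∃ v1 v2 v3 v4 v5 v6 v7 v8 v9 v10 v11 v12 : ℝ,
      v1*v10 + v2*v7 + v3*v5 = 0 ∧
      v1*v11 + v2*v8 + v3*v7 = 0 ∧
      v1*v12 + v10*v3 + v11*v2 = 0 ∧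
      v1 > 0 ∧ v2 > 0 ∧ v3 > 0 ∧ v4 > 0 ∧ v6 > 0 ∧ v9 > 0 ∧
      2*v11*v6*v9 > v12*v6^2 + v8*v9^2 ∧
      2*v10*v6*(v11*v4 + v7*v9) + v9*(2*v11*v4*v7 - 2*v11*v5*v6 + v5*v8*v9)
        + v12*(v4^2*v8 - 2*v4*v6*v7 + v5*v6^2)
        > v10^2*v6^2 + 2*v10*v4*v8*v9 + v11^2*v4^2 + v7^2*v9^2 ∧
      v12 > 0 := by
  rintro ⟨v1, v2, v3, v4, v5, v6, v7, v8, v9, v10, v11, v12,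
    h1, h2, h3, p1, p2, p3, p4, p6, p9, hA, hB, h12⟩
  -- The three equations say H·w = 0 for w = (v3, v2, v1). Reduce everything to the
  -- 2×2 quadratic form Q(s,t) = v5 s² + 2 v7 s t + v8 t².
  -- Step 1: v12 > 0 forces Q(v3, v2) > 0.
  have key1 : v1^2*v12 = v5*v3^2 + 2*v7*v3*v2 + v8*v2^2 := by
    linear_combination v1*h3 - v3*h1 - v2*h2
  have hQw : v5*v3^2 + 2*v7*v3*v2 + v8*v2^2 > 0 := by
    nlinarith [mul_pos (mul_pos p1 p1) h12]
  -- Step 2: the bordered-Hessian inequality forces det Q = v5 v8 − v7² > 0.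
  have hS : v3*v4 + v2*v6 + v1*v9 > 0 := by positivity
  have hD : v5*v8 - v7^2 > 0 := by
    have key2 : v1^2*(2*v10*v6*(v11*v4 + v7*v9) + v9*(2*v11*v4*v7 - 2*v11*v5*v6 + v5*v8*v9)
        + v12*(v4^2*v8 - 2*v4*v6*v7 + v5*v6^2)
        - (v10^2*v6^2 + 2*v10*v4*v8*v9 + v11^2*v4^2 + v7^2*v9^2))
        = (v3*v4 + v2*v6 + v1*v9)^2*(v5*v8 - v7^2) := by
      linear_combination
        (-2*v1*v4*v9*v8 - v1*v6^2*v10 + 2*v1*v6*v9*v7 - 2*v2*v4*v6*v8 + v2*v6^2*v7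
          - v3*v4^2*v8)*h1
        + (-v1*v4^2*v11 + 2*v1*v4*v6*v10 + 2*v1*v4*v9*v7 - 2*v1*v6*v9*v5 + 2*v2*v4*v6*v7
          - v2*v6^2*v5 + v3*v4^2*v7)*h2
        + (v1*v4^2*v8 - 2*v1*v4*v6*v7 + v1*v6^2*v5)*h3
    nlinarith [mul_pos (mul_pos p1 p1) (sub_pos.mpr hB), mul_pos hS hS]
  -- Hence v5 > 0, so Q is positive definite.
  have hv5 : v5 > 0 := by
    have hv5Q : v5*(v5*v3^2 + 2*v7*v3*v2 + v8*v2^2) > 0 := by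
      have idv : v5*(v5*v3^2 + 2*v7*v3*v2 + v8*v2^2)
          = (v5*v3 + v7*v2)^2 + (v5*v8 - v7^2)*v2^2 := by ring
      rw [idv]
      have h2sq : (0:ℝ) < (v5*v8 - v7^2)*v2^2 := mul_pos hD (by positivity)
      linarith [sq_nonneg (v5*v3 + v7*v2)]
    nlinarith [hv5Q, hQw]
  -- Step 3: but the quasi-concavity inequality in (y,z) makes Q negative at
  -- u = (v6 v3, v1 v9 + v6 v2), a contradiction.
  have key3 : v1^2*(2*v11*v6*v9 - (v12*v6^2 + v8*v9^2))
      = -(v5*(v6*v3)^2 + 2*v7*(v6*v3)*(v1*v9 + v6*v2) + v8*(v1*v9 + v6*v2)^2) := by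
    linear_combination (v6^2*v3)*h1 + (v6^2*v2 + 2*v1*v6*v9)*h2 + (-(v1*v6^2))*h3
  have hQu : v5*(v6*v3)^2 + 2*v7*(v6*v3)*(v1*v9 + v6*v2) + v8*(v1*v9 + v6*v2)^2 < 0 := by
    nlinarith [mul_pos (mul_pos p1 p1) (sub_pos.mpr hA)]
  have idu : v5*(v5*(v6*v3)^2 + 2*v7*(v6*v3)*(v1*v9 + v6*v2) + v8*(v1*v9 + v6*v2)^2)
      = (v5*(v6*v3) + v7*(v1*v9 + v6*v2))^2 + (v5*v8 - v7^2)*(v1*v9 + v6*v2)^2 := by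
    ring
  have hneg := mul_neg_of_pos_of_neg hv5 hQu
  have hnn : 0 ≤ (v5*(v6*v3) + v7*(v1*v9 + v6*v2))^2
      + (v5*v8 - v7^2)*(v1*v9 + v6*v2)^2 :=
    add_nonneg (sq_nonneg _) (mul_nonneg hD.le (sq_nonneg _))
  linarith [idu, hnn, hneg]
end

section
/- There is no tuple of real numbers (v1,...,v12) satisfying all of: v1*v10 + v2*v7 + v3*v5 = 0; v1*v11 + v2*v8 + v3*v7 = 0; v1*v12 + v10*v3 + v11*v2 = 0; v1 > 0; v2 > 0; v3 > 0; v4 > 0; v6 > 0; v9 > 0; 2*v11*v6*v9 > v12*v6^2 + v8*v9^2; 2*v10*v6*(v11*v4 + v7*v9) + v9*(2*v11*v4*v7 - 2*v11*v5*v6 + v5*v8*v9) + v12*(v4^2*v8 - 2*v4*v6*v7 + v5*v6^2) > v10^2*v6^2 + 2*v10*v4*v8*v9 + v11^2*v4^2 + v7^2*v9^2; and v5 > 0. -/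
set_option maxHeartbeats 1000000


theorem production_clause_two_unsat :
    ¬ ∃ v1 v2 v3 v4 v5 v6 v7 v8 v9 v10 v11 v12 : ℝ,
      v1*v10 + v2*v7 + v3*v5 = 0 ∧
      v1*v11 + v2*v8 + v3*v7 = 0 ∧
      v1*v12 + v10*v3 + v11*v2 = 0 ∧
      v1 > 0 ∧ v2 > 0 ∧ v3 > 0 ∧ v4 > 0 ∧ v6 > 0 ∧ v9 > 0 ∧
      2*v11*v6*v9 > v12*v6^2 + v8*v9^2 ∧
      2*v10*v6*(v11*v4 + v7*v9) + v9*(2*v11*v4*v7 - 2*v11*v5*v6 + v5*v8*v9)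
        + v12*(v4^2*v8 - 2*v4*v6*v7 + v5*v6^2)
        > v10^2*v6^2 + 2*v10*v4*v8*v9 + v11^2*v4^2 + v7^2*v9^2 ∧
      v5 > 0 := by
  rintro ⟨v1,v2,v3,v4,v5,v6,v7,v8,v9,v10,v11,v12,e1,e2,e3,h1,h2,h3,h4,h6,h9,I1,I2,h5⟩
  have key2 : v1^2*((2*v10*v6*(v11*v4 + v7*v9) + v9*(2*v11*v4*v7 - 2*v11*v5*v6 + v5*v8*v9)
        + v12*(v4^2*v8 - 2*v4*v6*v7 + v5*v6^2))
        - (v10^2*v6^2 + 2*v10*v4*v8*v9 + v11^2*v4^2 + v7^2*v9^2))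
      = (v5*v8 - v7^2)*(v3*v4+v2*v6+v1*v9)^2 := by
    linear_combination (-(v3*v4^2*v8) + v2*v6^2*v7 - 2*v2*v4*v6*v8 + 2*v1*v6*v7*v9
        - v1*v6^2*v10 - 2*v1*v4*v8*v9)*e1
      + (v3*v4^2*v7 - v2*v5*v6^2 + 2*v2*v4*v6*v7 - 2*v1*v5*v6*v9 + 2*v1*v4*v7*v9
        + 2*v1*v4*v6*v10 - v1*v4^2*v11)*e2
      + (v1*v5*v6^2 - 2*v1*v4*v6*v7 + v1*v4^2*v8)*e3
  have key1 : v1^2*(2*v11*v6*v9 - (v12*v6^2 + v8*v9^2))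
      = -(v8*(v1*v9+v2*v6)^2 + 2*v7*(v1*v9+v2*v6)*(v3*v6) + v5*(v3*v6)^2) := by
    linear_combination (v3*v6^2)*e1 + (v2*v6^2 + 2*v1*v6*v9)*e2 + (-(v1*v6^2))*e3
  have hA : v3*v4+v2*v6+v1*v9 > 0 := by positivity
  have h1sq : v1^2 > 0 := by positivity
  have hI2 : (0:ℝ) < (v5*v8 - v7^2)*(v3*v4+v2*v6+v1*v9)^2 := by
    rw [← key2]; exact mul_pos h1sq (by linarith)
  have hA2 : (0:ℝ) < (v3*v4+v2*v6+v1*v9)^2 := by positivity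
  have hdet : v5*v8 - v7^2 > 0 := by
    by_contra h
    push_neg at h
    nlinarith [mul_nonneg (neg_nonneg.mpr h) hA2.le]
  have h8 : v8 > 0 := by nlinarith [sq_nonneg v7]
  have h' : (0:ℝ) < v1^2*(2*v11*v6*v9 - (v12*v6^2 + v8*v9^2)) := mul_pos h1sq (by linarith)
  rw [key1] at h'
  have hQ : v8*(v1*v9+v2*v6)^2 + 2*v7*(v1*v9+v2*v6)*(v3*v6) + v5*(v3*v6)^2 < 0 := by linarith
  have hb2 : (0:ℝ) < (v3*v6)^2 := by positivity
  nlinarith [mul_pos h8 (show (0:ℝ) < -(v8*(v1*v9+v2*v6)^2 + 2*v7*(v1*v9+v2*v6)*(v3*v6) + v5*(v3*v6)^2) from by linarith),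
    sq_nonneg (v8*(v1*v9+v2*v6)+v7*(v3*v6)), mul_pos hdet hb2]
end

section
/- For all real numbers v1,...,v12: if v1*v10 + v2*v7 + v3*v5 = 0, v1*v11 + v2*v8 + v3*v7 = 0, v1*v12 + v10*v3 + v11*v2 = 0, v1 > 0, v2 > 0, v3 > 0, v4 > 0, v6 > 0, v9 > 0, 2*v11*v6*v9 > v12*v6^2 + v8*v9^2, and 2*v10*v6*(v11*v4 + v7*v9) + v9*(2*v11*v4*v7 - 2*v11*v5*v6 + v5*v8*v9) + v12*(v4^2*v8 - 2*v4*v6*v7 + v5*v6^2) > v10^2*v6^2 + 2*v10*v4*v8*v9 + v11^2*v4^2 + v7^2*v9^2, then v12 ≤ 0 ∧ v5 ≤ 0 ∧ v8 ≤ 0 ∧ v12*v5 ≥ v10^2 ∧ v12*v8 ≥ v11^2 ∧ v8*v5 ≥ v7^2 ∧ v8*(v10^2 - v12*v5) + v11^2*v5 + v12*v7^2 ≥ 2*v10*v11*v7. -/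
/-- If a binary quadratic form is everywhere nonpositive, its discriminant
condition `b^2 ≤ a*c` holds. -/
lemma nsd_two (a b c : ℝ) (h : ∀ s t : ℝ, a*s^2 + 2*b*s*t + c*t^2 ≤ 0) :
    b^2 ≤ a*c := by
  have ha : a ≤ 0 := by nlinarith [h 1 0]
  rcases lt_or_eq_of_le ha with ha' | ha'
  · nlinarith [h b (-a)]
  · -- a = 0
    have hb : b = 0 := by
      by_contra hb
      have h' := h ((1 - c)/(2*b)) 1
      have hx : 2*b*((1 - c)/(2*b)) = 1 - c := by
        field_simp
      nlinarith [h']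
    subst ha'
    subst hb
    norm_num

set_option maxHeartbeats 4000000 in
theorem production_function_concavity
    (v1 v2 v3 v4 v5 v6 v7 v8 v9 v10 v11 v12 : ℝ)
    (e1 : v1*v10 + v2*v7 + v3*v5 = 0)
    (e2 : v1*v11 + v2*v8 + v3*v7 = 0)
    (e3 : v1*v12 + v10*v3 + v11*v2 = 0)
    (h1 : v1 > 0) (h2 : v2 > 0) (h3 : v3 > 0)
    (h4 : v4 > 0) (h6 : v6 > 0) (h9 : v9 > 0)
    (q1 : 2*v11*v6*v9 > v12*v6^2 + v8*v9^2)
    (q2 : 2*v10*v6*(v11*v4 + v7*v9) + v9*(2*v11*v4*v7 - 2*v11*v5*v6 + v5*v8*v9)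
        + v12*(v4^2*v8 - 2*v4*v6*v7 + v5*v6^2)
        > v10^2*v6^2 + 2*v10*v4*v8*v9 + v11^2*v4^2 + v7^2*v9^2) :
    v12 ≤ 0 ∧ v5 ≤ 0 ∧ v8 ≤ 0 ∧
    v12*v5 ≥ v10^2 ∧ v12*v8 ≥ v11^2 ∧ v8*v5 ≥ v7^2 ∧
    v8*(v10^2 - v12*v5) + v11^2*v5 + v12*v7^2 ≥ 2*v10*v11*v7 := by
  -- Abbreviations for the restricted quadratic form after eliminating w1.
  set A : ℝ := v12*v6^2 - 2*v11*v9*v6 + v8*v9^2 with hAdef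
  set B : ℝ := v12*v6*v4 - v10*v9*v6 - v11*v9*v4 + v7*v9^2 with hBdef
  set C : ℝ := v12*v4^2 - 2*v10*v9*v4 + v5*v9^2 with hCdef
  have hA : A < 0 := by rw [hAdef]; linarith [q1]
  have hDeq : A*C - B^2 = v9^2 * ((2*v10*v6*(v11*v4 + v7*v9) + v9*(2*v11*v4*v7 - 2*v11*v5*v6 + v5*v8*v9)
        + v12*(v4^2*v8 - 2*v4*v6*v7 + v5*v6^2))
        - (v10^2*v6^2 + 2*v10*v4*v8*v9 + v11^2*v4^2 + v7^2*v9^2)) := by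
    rw [hAdef, hBdef, hCdef]; ring
  have hD : A*C - B^2 > 0 := by
    rw [hDeq]
    exact mul_pos (pow_pos h9 2) (sub_pos.2 q2)
  -- Negative semidefiniteness on the hyperplane orthogonal to the gradient.
  have keyw : ∀ w1 w2 w3 : ℝ, v9*w1 + v6*w2 + v4*w3 = 0 →
      v12*w1^2 + v8*w2^2 + v5*w3^2 + 2*(v11*w1*w2) + 2*(v10*w1*w3) + 2*(v7*w2*w3) ≤ 0 := by
    intro w1 w2 w3 hw
    have hQr : v9^2*(v12*w1^2 + v8*w2^2 + v5*w3^2 + 2*(v11*w1*w2) + 2*(v10*w1*w3) + 2*(v7*w2*w3))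
        = A*w2^2 + 2*B*(w2*w3) + C*w3^2 := by
      rw [hAdef, hBdef, hCdef]
      linear_combination (v12*(v9*w1 - v6*w2 - v4*w3) + 2*v11*v9*w2 + 2*v10*v9*w3) * hw
    have hAQ : A * (A*w2^2 + 2*B*(w2*w3) + C*w3^2)
        = (A*w2 + B*w3)^2 + (A*C - B^2)*w3^2 := by ring
    have hge : A * (A*w2^2 + 2*B*(w2*w3) + C*w3^2) ≥ 0 := by
      rw [hAQ]
      have := add_nonneg (sq_nonneg (A*w2 + B*w3)) (mul_nonneg hD.le (sq_nonneg w3))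
      linarith
    have hle : A*w2^2 + 2*B*(w2*w3) + C*w3^2 ≤ 0 := by nlinarith [hge, hA]
    nlinarith [hQr, hle, pow_pos h9 2]
  -- Full negative semidefiniteness via the kernel vector (v1,v2,v3).
  have hS : v9*v1 + v6*v2 + v4*v3 > 0 := by positivity
  have key : ∀ z1 z2 z3 : ℝ,
      v12*z1^2 + v8*z2^2 + v5*z3^2 + 2*(v11*z1*z2) + 2*(v10*z1*z3) + 2*(v7*z2*z3) ≤ 0 := by
    intro z1 z2 z3
    set t : ℝ := (v9*z1 + v6*z2 + v4*z3)/(v9*v1 + v6*v2 + v4*v3) with htdef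
    have hw := keyw (z1 - t*v1) (z2 - t*v2) (z3 - t*v3) (by
      rw [htdef]; field_simp; ring)
    calc v12*z1^2 + v8*z2^2 + v5*z3^2 + 2*(v11*z1*z2) + 2*(v10*z1*z3) + 2*(v7*z2*z3)
        = v12*(z1 - t*v1)^2 + v8*(z2 - t*v2)^2 + v5*(z3 - t*v3)^2
          + 2*(v11*(z1 - t*v1)*(z2 - t*v2)) + 2*(v10*(z1 - t*v1)*(z3 - t*v3))
          + 2*(v7*(z2 - t*v2)*(z3 - t*v3)) := by
          linear_combination (2*t*z3 - t^2*v3)*e1 + (2*t*z2 - t^2*v2)*e2 + (2*t*z1 - t^2*v1)*e3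
      _ ≤ 0 := hw
  have c12 : v12 ≤ 0 := by linarith [key 1 0 0]
  have c8 : v8 ≤ 0 := by linarith [key 0 1 0]
  have c5 : v5 ≤ 0 := by linarith [key 0 0 1]
  have m1 : v10^2 ≤ v12*v5 := by
    apply nsd_two
    intro s t
    linarith [key s 0 t]
  have m2 : v11^2 ≤ v12*v8 := by
    apply nsd_two
    intro s t
    linarith [key s t 0]
  have m3 : v7^2 ≤ v8*v5 := by
    apply nsd_two
    intro s t
    linarith [key 0 s t]
  have hdet : v8*(v10^2 - v12*v5) + v11^2*v5 + v12*v7^2 - 2*v10*v11*v7 = 0 := by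
    have h1' : v1 ≠ 0 := ne_of_gt h1
    have h0 : v1*(v8*(v10^2 - v12*v5) + v11^2*v5 + v12*v7^2 - 2*v10*v11*v7) = 0 := by
      linear_combination -((v11*v7 - v8*v10)*e1 + (v10*v7 - v11*v5)*e2 + (v8*v5 - v7^2)*e3)
    exact (mul_eq_zero.mp h0).resolve_left h1'
  exact ⟨c12, c5, c8, m1, m2, m3, by linarith [hdet]⟩
end

section
/- For real numbers a11, a10, a21, a20, a32, a31, a30 with a11 > 0: (∃ x, a11*x + a10 = 0 ∧ a21*x + a20 > 0 ∧ a32*x^2 + a31*x + a30 > 0) if and only if (a32*a10^2 + a11^2*a30 > a10*a11*a31 ∧ a10*a21 < a11*a20). -/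
theorem block_a_nondegenerate (a11 a10 a21 a20 a32 a31 a30 : ℝ) (h : a11 > 0) :
    (∃ x : ℝ, a11*x + a10 = 0 ∧ a21*x + a20 > 0 ∧ a32*x^2 + a31*x + a30 > 0) ↔
    (a32*a10^2 + a11^2*a30 > a10*a11*a31 ∧ a10*a21 < a11*a20) := by
  constructor
  · rintro ⟨x, he, h2, h3⟩
    have hx : a10 = -(a11*x) := by linarith
    subst hx
    constructor
    · nlinarith [sq_nonneg a11, mul_pos (mul_pos h h) h3]
    · nlinarith [mul_pos h h2]
  · rintro ⟨h1, h2⟩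
    refine ⟨-a10/a11, by field_simp; ring, ?_, ?_⟩
    · rw [gt_iff_lt, ← sub_pos]
      have : a21 * (-a10 / a11) + a20 - 0 = (a11*a20 - a10*a21)/a11 := by
        field_simp; ring
      rw [this]
      exact div_pos (by linarith) h
    · rw [gt_iff_lt, ← sub_pos]
      have : a32 * (-a10/a11)^2 + a31 * (-a10/a11) + a30 - 0 =
          (a32*a10^2 + a11^2*a30 - a10*a11*a31)/a11^2 := by
        field_simp; ring
      rw [this]
      exact div_pos (by linarith) (by positivity)
end
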